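/- arXiv:0805.1956 — 3 statements merged into one kernel-verified Lean document; each statement's English description precedes it below -/
import Mathlib

section
/- For the ODE system ρ μ' = 4(μ − 1), ρ' = −4(μ^{-1}+3) in positive functions with μ(0) ≠ 1, any maximal solution is defined on an interval of the form (−∞, T) with T finite, and along the solution ρ(t) → ∞ and μ(t) → 1 as t → −∞. -/
/-!
Along a solution the quantity `ρ (μ - 1)⁴ / μ` is constant, and positive because `μ ≠ 1` at one
time; hence `μ - 1` never vanishes, keeps its sign, and `μ` is monotone. Since `ρ' ≤ -12` and
`ρ > 0`, the domain is bounded above. If it were also bounded below, then near its left end `μ`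
would be monotone between `μ(t₀)` and `1` and `ρ` monotone with bounded derivative, so `(ρ, μ)`
would converge to a point of the open quadrant where the vector field is `C¹`; a local solution
through that point extends the given one, against maximality. So the domain is `(-∞, T)`, `ρ`
grows at least like `-12 t` as `t → -∞`, and `(μ - 1)⁴ / μ = c / ρ → 0` forces `μ → 1`.
-/

open Set Filter Topology

namespace Set.OrdConnected

variable {D : Set ℝ} (hD : D.OrdConnected) {f f' : ℝ → ℝ}
include hD

theorem monotoneOn_of_hasDerivAt_nonneg (hf : ∀ x ∈ D, HasDerivAt f (f' x) x)
    (hf' : ∀ x ∈ D, 0 ≤ f' x) : MonotoneOn f D :=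
  monotoneOn_of_hasDerivWithinAt_nonneg hD.convex
    (fun x hx => (hf x hx).continuousAt.continuousWithinAt)
    (fun x hx => (hf x (interior_subset hx)).hasDerivWithinAt)
    (fun x hx => hf' x (interior_subset hx))

theorem antitoneOn_of_hasDerivAt_nonpos (hf : ∀ x ∈ D, HasDerivAt f (f' x) x)
    (hf' : ∀ x ∈ D, f' x ≤ 0) : AntitoneOn f D :=
  antitoneOn_of_hasDerivWithinAt_nonpos hD.convex
    (fun x hx => (hf x hx).continuousAt.continuousWithinAt)
    (fun x hx => (hf x (interior_subset hx)).hasDerivWithinAt)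
    (fun x hx => hf' x (interior_subset hx))

theorem eq_of_hasDerivAt_zero (hf : ∀ x ∈ D, HasDerivAt f 0 x) {x y : ℝ} (hx : x ∈ D)
    (hy : y ∈ D) : f x = f y := by
  have hmono := hD.monotoneOn_of_hasDerivAt_nonneg hf fun _ _ => le_rfl
  have hanti := hD.antitoneOn_of_hasDerivAt_nonpos hf fun _ _ => le_rfl
  rcases le_total x y with hxy | hyx
  · exact le_antisymm (hmono hx hy hxy) (hanti hx hy hxy)
  · exact le_antisymm (hanti hy hx hyx) (hmono hy hx hyx)

end Set.OrdConnected

theorem IsOpen.csSup_notMem {D : Set ℝ} (hD : IsOpen D) (hbdd : BddAbove D) : sSup D ∉ D :=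
  fun hmem =>
    have ⟨_, hlt, hx⟩ := ((frequently_gt_nhds _).and_eventually (hD.mem_nhds hmem)).exists
    (le_csSup hbdd hx).not_gt hlt

theorem IsOpen.csInf_notMem {D : Set ℝ} (hD : IsOpen D) (hbdd : BddBelow D) : sInf D ∉ D :=
  fun hmem =>
    have ⟨_, hlt, hx⟩ := ((frequently_lt_nhds _).and_eventually (hD.mem_nhds hmem)).exists
    (csInf_le hbdd hx).not_gt hlt

theorem IsOpen.eq_Ioo_csInf_csSup {D : Set ℝ} (hD : IsOpen D) (hconn : D.OrdConnected)
    (hne : D.Nonempty) (hbb : BddBelow D) (hba : BddAbove D) : D = Ioo (sInf D) (sSup D) :=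
  Subset.antisymm
    (fun _ ht => ⟨(csInf_le hbb ht).lt_of_ne fun h => hD.csInf_notMem hbb (h ▸ ht),
      (le_csSup hba ht).lt_of_ne fun h => hD.csSup_notMem hba (h ▸ ht)⟩)
    (IsConnected.Ioo_csInf_csSup_subset ⟨hne, hconn.isPreconnected⟩ hbb hba)

theorem IsOpen.eq_Iio_csSup {D : Set ℝ} (hD : IsOpen D) (hconn : D.OrdConnected)
    (hbb : ¬BddBelow D) (hba : BddAbove D) : D = Iio (sSup D) :=
  Subset.antisymm
    (fun _ ht => (le_csSup hba ht).lt_of_ne fun h => hD.csSup_notMem hba (h ▸ ht))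
    (hconn.isPreconnected.Iio_csSup_subset hbb hba)

theorem exists_tendsto_nhdsGT_mem_Icc {f : ℝ → ℝ} {a b L M : ℝ} (hab : a < b)
    (hf : MonotoneOn f (Ioo a b) ∨ AntitoneOn f (Ioo a b)) (hfLM : ∀ t ∈ Ioo a b, f t ∈ Icc L M) :
    ∃ ℓ ∈ Icc L M, Tendsto f (𝓝[>] a) (𝓝 ℓ) := by
  have hne : (Ioo a b).Nonempty := nonempty_Ioo.2 hab
  obtain ⟨ℓ, hℓ⟩ : ∃ ℓ, Tendsto f (𝓝[>] a) (𝓝 ℓ) := by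
    rcases hf with hmono | hanti
    · exact ⟨_, hmono.tendsto_nhdsWithin_Ioo_right hne
        ⟨L, forall_mem_image.2 fun t ht => (hfLM t ht).1⟩⟩
    · exact ⟨_, hanti.tendsto_nhdsWithin_Ioo_right hne
        ⟨M, forall_mem_image.2 fun t ht => (hfLM t ht).2⟩⟩
  refine ⟨ℓ, isClosed_Icc.mem_of_tendsto hℓ ?_, hℓ⟩
  filter_upwards [Ioo_mem_nhdsGT hab] using hfLM

theorem le_pow_four_div_of_le_abs_sub_one {m ε : ℝ} (hm : 0 < m) (hε : 0 ≤ ε) (hε1 : ε ≤ 1)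
    (h : ε ≤ |m - 1|) : ε ^ 4 / 2 ≤ (m - 1) ^ 4 / m := by
  have hε4 : ε ^ 4 ≤ (m - 1) ^ 4 := by
    simpa [Even.pow_abs ⟨2, rfl⟩] using pow_le_pow_left₀ hε h 4
  have hε41 : ε ^ 4 ≤ 1 := pow_le_one₀ hε hε1
  rw [le_div_iff₀ hm]
  rcases le_or_gt m 2 with hm2 | hm2
  · nlinarith [pow_nonneg hε 4]
  · nlinarith [sq_nonneg (m - 1), sq_nonneg ((m - 1) ^ 2 - 1)]

theorem tendsto_one_of_tendsto_pow_four_div {α : Type*} {l : Filter α} {m : α → ℝ}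
    (hpos : ∀ᶠ x in l, 0 < m x) (h : Tendsto (fun x => (m x - 1) ^ 4 / m x) l (𝓝 0)) :
    Tendsto m l (𝓝 1) := by
  refine Metric.tendsto_nhds.2 fun ε hε => ?_
  have hε' : 0 < min ε 1 := lt_min hε one_pos
  filter_upwards [hpos, h.eventually (gt_mem_nhds (by positivity : 0 < min ε 1 ^ 4 / 2))]
    with x hx hsmall
  by_contra! hfar
  exact hsmall.not_ge <| le_pow_four_div_of_le_abs_sub_one hx hε'.le (min_le_right _ _)
    ((min_le_left _ _).trans (by rwa [Real.dist_eq] at hfar))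

section Extension

variable {E : Type*} [NormedAddCommGroup E] [NormedSpace ℝ E] {v : E → E} {y : ℝ → E}
  {p : E} {a b : ℝ}

theorem hasDerivWithinAt_Ici_of_tendsto_nhdsGT (hab : a < b) (hv : ContinuousAt v p)
    (hy : ∀ t ∈ Ioo a b, HasDerivAt y (v (y t)) t) (hya : y a = p)
    (hlim : Tendsto y (𝓝[>] a) (𝓝 p)) : HasDerivWithinAt y (v p) (Ici a) a := by
  refine hasDerivWithinAt_Ici_of_tendsto_deriv (s := Ioo a b)
    (fun t ht => (hy t ht).differentiableAt.differentiableWithinAt) ?_ (Ioo_mem_nhdsGT hab) ?_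
  · rw [ContinuousWithinAt, hya]
    exact hlim.mono_left (nhdsWithin_mono _ Ioo_subset_Ioi_self)
  · refine (hv.tendsto.comp hlim).congr' ?_
    filter_upwards [Ioo_mem_nhdsGT hab] with t ht
    exact (hy t ht).deriv.symm

theorem exists_extension_left [CompleteSpace E] {U : Set E} (hU : IsOpen U) (hpU : p ∈ U)
    (hv : ContDiffAt ℝ 1 v p) (hy : ∀ t ∈ Ioo a b, HasDerivAt y (v (y t)) t ∧ y t ∈ U)
    (hlim : Tendsto y (𝓝[>] a) (𝓝 p)) :
    ∃ a' < a, ∃ z : ℝ → E, EqOn z y (Ioo a b) ∧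
      ∀ t ∈ Ioo a' b, HasDerivAt z (v (z t)) t ∧ z t ∈ U := by
  obtain ⟨f, hfa, ε, hε, hf⟩ := hv.exists_forall_mem_closedBall_exists_eq_forall_mem_Ioo_hasDerivAt₀ a
  have hfU : ∀ᶠ t in 𝓝 a, f t ∈ U ∧ t ∈ Ioo (a - ε) (a + ε) :=
    ((hf a ⟨by linarith, by linarith⟩).continuousAt.eventually
      (hfa ▸ hU.mem_nhds hpU)).and (Ioo_mem_nhds (by linarith) (by linarith))
  obtain ⟨a', ha', hsub⟩ := mem_nhdsLE_iff_exists_Ioc_subset.1 (nhdsWithin_le_nhds hfU)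
  set z : ℝ → E := fun t => if t ≤ a then f t else y t
  have hzf : EqOn z f (Iic a) := fun t ht => if_pos ht
  have hzy : EqOn z y (Ioi a) := fun t ht => if_neg (not_le.2 ht)
  refine ⟨a', ha', z, hzy.mono Ioo_subset_Ioi_self, fun t ht => ?_⟩
  rcases lt_trichotomy t a with hta | rfl | hta
  · obtain ⟨hU', hε'⟩ := hsub ⟨ht.1, hta.le⟩
    rw [hzf hta.le]
    exact ⟨(hf t hε').congr_of_eventuallyEq
      (eventuallyEq_of_mem (Iic_mem_nhds hta) hzf), hU'⟩
  · have hza : z t = p := (hzf self_mem_Iic).trans hfa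
    have hleft : HasDerivWithinAt z (v p) (Iic t) t := by
      have := (hf t ⟨by linarith, by linarith⟩).hasDerivWithinAt.congr hzf (hzf self_mem_Iic)
      rwa [hfa] at this
    have hright : HasDerivWithinAt z (v p) (Ici t) t := by
      refine hasDerivWithinAt_Ici_of_tendsto_nhdsGT ht.2 hv.continuousAt (fun s hs => ?_) hza
        (hlim.congr' (eventuallyEq_nhdsWithin_of_eqOn hzy).symm)
      exact (hzy hs.1).symm ▸ (hy s hs).1.congr_of_eventuallyEq
        (eventuallyEq_of_mem (Ioi_mem_nhds hs.1) hzy)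
    rw [hza]
    refine ⟨?_, hpU⟩
    simpa [Iic_union_Ici] using hleft.union hright
  · rw [hzy hta]
    obtain ⟨hd, hU'⟩ := hy t ⟨hta, ht.2⟩
    exact ⟨hd.congr_of_eventuallyEq (eventuallyEq_of_mem (Ioi_mem_nhds hta) hzy), hU'⟩

end Extension

section Prod

variable {𝕜 E F : Type*} [NontriviallyNormedField 𝕜] [NormedAddCommGroup E] [NormedSpace 𝕜 E]
  [NormedAddCommGroup F] [NormedSpace 𝕜 F] {f : 𝕜 → E × F} {f' : E × F} {t : 𝕜}

theorem HasDerivAt.fst_prod (h : HasDerivAt f f' t) : HasDerivAt (fun s => (f s).1) f'.1 t := by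
  simpa using h.hasFDerivAt.fst.hasDerivAt

theorem HasDerivAt.snd_prod (h : HasDerivAt f f' t) : HasDerivAt (fun s => (f s).2) f'.2 t := by
  simpa using h.hasFDerivAt.snd.hasDerivAt

end Prod

noncomputable def chowYangField (p : ℝ × ℝ) : ℝ × ℝ := (-4 * (p.2⁻¹ + 3), 4 * (p.2 - 1) / p.1)

theorem contDiffAt_chowYangField {p : ℝ × ℝ} (hp : p ∈ Ioi (0 : ℝ) ×ˢ Ioi (0 : ℝ)) :
    ContDiffAt ℝ 1 chowYangField p := by
  have h1 : p.1 ≠ 0 := hp.1.ne'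
  have h2 : p.2 ≠ 0 := hp.2.ne'
  unfold chowYangField
  fun_prop (disch := assumption)

noncomputable def chowYangInvariant (r m : ℝ) : ℝ := r * (m - 1) ^ 4 / m

def IsChowYangSolution (D : Set ℝ) (ρ μ : ℝ → ℝ) : Prop :=
  ∀ t ∈ D, 0 < ρ t ∧ 0 < μ t ∧
    HasDerivAt μ (4 * (μ t - 1) / ρ t) t ∧ HasDerivAt ρ (-4 * ((μ t)⁻¹ + 3)) t

theorem isChowYangSolution_iff {D : Set ℝ} {ρ μ : ℝ → ℝ} :
    IsChowYangSolution D ρ μ ↔ ∀ t ∈ D, HasDerivAt (fun s => (ρ s, μ s))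
      (chowYangField (ρ t, μ t)) t ∧ (ρ t, μ t) ∈ Ioi (0 : ℝ) ×ˢ Ioi (0 : ℝ) :=
  forall₂_congr fun _ _ => ⟨fun ⟨hρ0, hμ0, hμ, hρ⟩ => ⟨hρ.prodMk hμ, hρ0, hμ0⟩,
    fun ⟨hd, hρ0, hμ0⟩ => ⟨hρ0, hμ0, hd.snd_prod, hd.fst_prod⟩⟩

namespace IsChowYangSolution

variable {D : Set ℝ} {ρ μ : ℝ → ℝ}

section

variable (h : IsChowYangSolution D ρ μ)
include h

theorem mono {D' : Set ℝ} (hD' : D' ⊆ D) : IsChowYangSolution D' ρ μ :=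
  fun t ht => h t (hD' ht)

theorem hasDerivAt_invariant {t : ℝ} (ht : t ∈ D) :
    HasDerivAt (fun s => chowYangInvariant (ρ s) (μ s)) 0 t := by
  obtain ⟨hρ0, hμ0, hμ, hρ⟩ := h t ht
  refine ((hρ.mul ((hμ.sub_const 1).pow 4)).div hμ hμ0.ne').congr_deriv ?_
  simp only [Pi.mul_apply, Pi.pow_apply]
  field_simp [hρ0.ne']
  ring

variable (hD : D.OrdConnected)
include hD

theorem invariant_eq {s t : ℝ} (hs : s ∈ D) (ht : t ∈ D) :
    chowYangInvariant (ρ t) (μ t) = chowYangInvariant (ρ s) (μ s) :=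
  hD.eq_of_hasDerivAt_zero (fun _ hx => h.hasDerivAt_invariant hx) ht hs

theorem mu_ne_one (hne1 : ∃ t ∈ D, μ t ≠ 1) {t : ℝ} (ht : t ∈ D) : μ t ≠ 1 := by
  obtain ⟨s, hs, hμs⟩ := hne1
  obtain ⟨hρs, hμs0, -⟩ := h s hs
  have hsub : μ s - 1 ≠ 0 := sub_ne_zero.2 hμs
  have hpos : 0 < chowYangInvariant (ρ s) (μ s) := by
    unfold chowYangInvariant
    positivity
  intro hμt
  have h0 : chowYangInvariant (ρ t) (μ t) = 0 := by simp [chowYangInvariant, hμt]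
  exact hpos.ne' ((h.invariant_eq hD hs ht).symm.trans h0)

theorem mu_lt_one_or_one_lt (hne1 : ∃ t ∈ D, μ t ≠ 1) :
    (∀ t ∈ D, μ t < 1) ∨ ∀ t ∈ D, 1 < μ t := by
  by_contra! hmixed
  obtain ⟨⟨u, hu, hμu⟩, ⟨w, hw, hμw⟩⟩ := hmixed
  have hcont : ContinuousOn μ D := fun t ht => (h t ht).2.2.1.continuousAt.continuousWithinAt
  obtain ⟨x, hx, hμx⟩ := hD.isPreconnected.intermediate_value hw hu hcont ⟨hμw, hμu⟩
  exact h.mu_ne_one hD hne1 hx hμx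

theorem antitoneOn_mu (hlt : ∀ t ∈ D, μ t < 1) : AntitoneOn μ D :=
  hD.antitoneOn_of_hasDerivAt_nonpos (fun t ht => (h t ht).2.2.1) fun t ht =>
    div_nonpos_of_nonpos_of_nonneg (by linarith [hlt t ht]) (h t ht).1.le

theorem monotoneOn_mu (hgt : ∀ t ∈ D, 1 < μ t) : MonotoneOn μ D :=
  hD.monotoneOn_of_hasDerivAt_nonneg (fun t ht => (h t ht).2.2.1) fun t ht =>
    div_nonneg (by linarith [hgt t ht]) (h t ht).1.le

theorem mu_mem_uIcc (hne1 : ∃ t ∈ D, μ t ≠ 1) {s t : ℝ} (hs : s ∈ D) (ht : t ∈ D)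
    (hst : s ≤ t) : μ s ∈ uIcc (μ t) 1 := by
  rcases h.mu_lt_one_or_one_lt hD hne1 with hlt | hgt
  · exact Icc_subset_uIcc ⟨h.antitoneOn_mu hD hlt hs ht hst, (hlt s hs).le⟩
  · exact Icc_subset_uIcc' ⟨(hgt s hs).le, h.monotoneOn_mu hD hgt hs ht hst⟩

theorem antitoneOn_rho_add_twelve_mul : AntitoneOn (fun t => ρ t + 12 * t) D :=
  hD.antitoneOn_of_hasDerivAt_nonpos
    (fun t ht => (h t ht).2.2.2.add ((hasDerivAt_id' t).const_mul 12)) fun t ht => by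
      have := inv_pos.2 (h t ht).2.1
      linarith

theorem antitoneOn_rho : AntitoneOn ρ D := fun s hs t ht hst => by
  have := h.antitoneOn_rho_add_twelve_mul hD hs ht hst
  linarith

theorem monotoneOn_rho_add_mul {m : ℝ} (hm : 0 < m) (hμm : ∀ t ∈ D, m ≤ μ t) :
    MonotoneOn (fun t => ρ t + 4 * (m⁻¹ + 3) * t) D :=
  hD.monotoneOn_of_hasDerivAt_nonneg
    (fun t ht => (h t ht).2.2.2.add ((hasDerivAt_id' t).const_mul _)) fun t ht => by
      have := inv_anti₀ hm (hμm t ht)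
      linarith

theorem bddAbove : BddAbove D := by
  rcases D.eq_empty_or_nonempty with rfl | ⟨t₀, ht₀⟩
  · exact bddAbove_empty
  refine ⟨max t₀ ((ρ t₀ + 12 * t₀) / 12), fun t ht => ?_⟩
  rcases le_total t t₀ with htt₀ | ht₀t
  · exact le_max_of_le_left htt₀
  · have := h.antitoneOn_rho_add_twelve_mul hD ht₀ ht ht₀t
    have := (h t ht).1
    exact le_max_of_le_right (by linarith)

end

theorem exists_tendsto_nhdsGT {a b : ℝ} (h : IsChowYangSolution (Ioo a b) ρ μ)
    (hne1 : ∃ t ∈ Ioo a b, μ t ≠ 1) :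
    ∃ p ∈ Ioi (0 : ℝ) ×ˢ Ioi (0 : ℝ), Tendsto (fun t => (ρ t, μ t)) (𝓝[>] a) (𝓝 p) := by
  obtain ⟨t₀, ht₀, -⟩ := id hne1
  have hD : (Ioo a b).OrdConnected := ordConnected_Ioo
  have hsub : Ioc a t₀ ⊆ Ioo a b := Ioc_subset_Ioo_right ht₀.2
  have hsub' : Ioo a t₀ ⊆ Ioo a b := Ioo_subset_Ioc_self.trans hsub
  have hμ_mem : ∀ t ∈ Ioc a t₀, μ t ∈ uIcc (μ t₀) 1 :=
    fun t ht => h.mu_mem_uIcc hD hne1 (hsub ht) ht₀ ht.2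
  have hm : 0 < min (μ t₀) 1 := lt_min (h t₀ ht₀).2.1 one_pos
  set K := 4 * ((min (μ t₀) 1)⁻¹ + 3)
  have hρ_mem : ∀ t ∈ Ioo a t₀, ρ t ∈ Icc (ρ t₀) (ρ t₀ + K * (t₀ - a)) := by
    intro t ht
    have hlower := h.antitoneOn_rho hD (hsub' ht) ht₀ ht.2.le
    have hupper := (h.mono hsub).monotoneOn_rho_add_mul ordConnected_Ioc hm
      (fun s hs => (hμ_mem s hs).1) (Ioo_subset_Ioc_self ht) ⟨ht₀.1, le_rfl⟩ ht.2.le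
    have hK : 0 < K := by positivity
    exact ⟨hlower, by nlinarith [ht.1]⟩
  have hμ_mono : MonotoneOn μ (Ioo a t₀) ∨ AntitoneOn μ (Ioo a t₀) :=
    (h.mu_lt_one_or_one_lt hD hne1).symm.imp (fun hgt => (h.monotoneOn_mu hD hgt).mono hsub')
      fun hlt => (h.antitoneOn_mu hD hlt).mono hsub'
  obtain ⟨ρa, hρa, hρlim⟩ := exists_tendsto_nhdsGT_mem_Icc ht₀.1
    (Or.inr ((h.antitoneOn_rho hD).mono hsub')) hρ_mem
  obtain ⟨μa, hμa, hμlim⟩ := exists_tendsto_nhdsGT_mem_Icc ht₀.1 hμ_mono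
    fun t ht => hμ_mem t (Ioo_subset_Ioc_self ht)
  exact ⟨(ρa, μa), ⟨(h t₀ ht₀).1.trans_le hρa.1, hm.trans_le hμa.1⟩, hρlim.prodMk_nhds hμlim⟩

theorem exists_ssuperset_of_bddBelow (h : IsChowYangSolution D ρ μ) (hD : D.OrdConnected)
    (hDopen : IsOpen D) (hne1 : ∃ t ∈ D, μ t ≠ 1) (hbdd : BddBelow D) :
    ∃ D', IsOpen D' ∧ D'.OrdConnected ∧ D ⊂ D' ∧ ∃ ρ' μ' : ℝ → ℝ,
      (∀ t ∈ D, ρ' t = ρ t ∧ μ' t = μ t) ∧ IsChowYangSolution D' ρ' μ' := by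
  obtain ⟨a, b, rfl⟩ : ∃ a b, D = Ioo a b := ⟨_, _, hDopen.eq_Ioo_csInf_csSup hD
    (hne1.imp fun _ => And.left) hbdd (h.bddAbove hD)⟩
  obtain ⟨p, hp, hlim⟩ := h.exists_tendsto_nhdsGT hne1
  obtain ⟨a', ha', z, hzy, hz⟩ := exists_extension_left (isOpen_Ioi.prod isOpen_Ioi) hp
    (contDiffAt_chowYangField hp) (isChowYangSolution_iff.1 h) hlim
  obtain ⟨t, ht, -⟩ := hne1
  refine ⟨Ioo a' b, isOpen_Ioo, ordConnected_Ioo,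
    (ssubset_iff_of_subset (Ioo_subset_Ioo_left ha'.le)).2
      ⟨a, ⟨ha', ht.1.trans ht.2⟩, fun ha => lt_irrefl a ha.1⟩,
    fun t => (z t).1, fun t => (z t).2, fun t ht => by simp [hzy ht], isChowYangSolution_iff.2 hz⟩

theorem tendsto_rho_atBot {b : ℝ} (h : IsChowYangSolution (Iio b) ρ μ) :
    Tendsto ρ atBot atTop := by
  obtain ⟨t₀, ht₀⟩ := exists_lt b
  refine tendsto_atTop_mono' _ ?_ (tendsto_atTop_add_const_left _ (ρ t₀ + 12 * t₀)
    (tendsto_id.const_mul_atBot_of_neg (by norm_num : (-12 : ℝ) < 0)))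
  filter_upwards [eventually_le_atBot t₀] with t ht
  have := h.antitoneOn_rho_add_twelve_mul ordConnected_Iio (ht.trans_lt ht₀) ht₀ ht
  simp only [id]
  linarith

theorem tendsto_mu (h : IsChowYangSolution D ρ μ) (hD : D.OrdConnected) {l : Filter ℝ}
    [l.NeBot] (hl : ∀ᶠ t in l, t ∈ D) (hρ : Tendsto ρ l atTop) : Tendsto μ l (𝓝 1) := by
  obtain ⟨s, hs⟩ := hl.exists
  refine tendsto_one_of_tendsto_pow_four_div (hl.mono fun t ht => (h t ht).2.1) <|
    (tendsto_const_nhds (x := chowYangInvariant (ρ s) (μ s))).div_atTop hρ |>.congr' ?_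
  filter_upwards [hl] with t ht
  rw [← h.invariant_eq hD hs ht, chowYangInvariant]
  field_simp [(h t ht).1.ne']

end IsChowYangSolution

theorem chowYang_flow_ancient_general (D : Set ℝ) (hDopen : IsOpen D) (hDconn : D.OrdConnected)
    (ρ μ : ℝ → ℝ)
    (hρpos : ∀ t ∈ D, 0 < ρ t) (hμpos : ∀ t ∈ D, 0 < μ t)
    (hμ : ∀ t ∈ D, HasDerivAt μ (4 * (μ t - 1) / ρ t) t)
    (hρ : ∀ t ∈ D, HasDerivAt ρ (-4 * ((μ t)⁻¹ + 3)) t)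
    (hne1 : ∃ t ∈ D, μ t ≠ 1)
    (hmax : ∀ (D' : Set ℝ) (ρ' μ' : ℝ → ℝ), IsOpen D' → D'.OrdConnected → D ⊆ D' →
      (∀ t ∈ D, ρ' t = ρ t ∧ μ' t = μ t) →
      (∀ t ∈ D', 0 < ρ' t ∧ 0 < μ' t ∧
        HasDerivAt μ' (4 * (μ' t - 1) / ρ' t) t ∧
        HasDerivAt ρ' (-4 * ((μ' t)⁻¹ + 3)) t) → D' = D) :
    ∃ T : ℝ, D = Set.Iio T ∧
      Filter.Tendsto ρ Filter.atBot Filter.atTop ∧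
      Filter.Tendsto μ Filter.atBot (nhds 1) := by
  have h : IsChowYangSolution D ρ μ := fun t ht => ⟨hρpos t ht, hμpos t ht, hμ t ht, hρ t ht⟩
  have hunbdd : ¬BddBelow D := fun hbdd =>
    let ⟨D', hopen, hconn, hss, ρ', μ', hagree, hsol⟩ :=
      h.exists_ssuperset_of_bddBelow hDconn hDopen hne1 hbdd
    hss.ne (hmax D' ρ' μ' hopen hconn hss.subset hagree hsol).symm
  have hD : D = Iio (sSup D) := hDopen.eq_Iio_csSup hDconn hunbdd (h.bddAbove hDconn)
  have hρlim : Tendsto ρ atBot atTop := (h.mono hD.ge).tendsto_rho_atBot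
  exact ⟨sSup D, hD, hρlim, h.tendsto_mu hDconn (mem_of_superset (Iio_mem_atBot _) hD.ge) hρlim⟩

/-- Any maximal positive solution of `ρ μ' = 4(μ−1)`, `ρ' = −4(μ⁻¹+3)` with `μ ≠ 1`
somewhere is ancient: its domain is `(−∞, T)` for some finite `T`, and as `t → −∞`,
`ρ(t) → ∞` and `μ(t) → 1`. -/
theorem chowYang_flow_ancient (D : Set ℝ) (hDopen : IsOpen D) (hDconn : D.OrdConnected)
    (hDne : D.Nonempty) (ρ μ : ℝ → ℝ)
    (hρpos : ∀ t ∈ D, 0 < ρ t) (hμpos : ∀ t ∈ D, 0 < μ t)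
    (hμ : ∀ t ∈ D, HasDerivAt μ (4 * (μ t - 1) / ρ t) t)
    (hρ : ∀ t ∈ D, HasDerivAt ρ (-4 * ((μ t)⁻¹ + 3)) t)
    (hne1 : ∃ t ∈ D, μ t ≠ 1)
    (hmax : ∀ (D' : Set ℝ) (ρ' μ' : ℝ → ℝ), IsOpen D' → D'.OrdConnected → D ⊆ D' →
      (∀ t ∈ D, ρ' t = ρ t ∧ μ' t = μ t) →
      (∀ t ∈ D', 0 < ρ' t ∧ 0 < μ' t ∧
        HasDerivAt μ' (4 * (μ' t - 1) / ρ' t) t ∧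
        HasDerivAt ρ' (-4 * ((μ' t)⁻¹ + 3)) t) → D' = D) :
    ∃ T : ℝ, D = Set.Iio T ∧
      Filter.Tendsto ρ Filter.atBot Filter.atTop ∧
      Filter.Tendsto μ Filter.atBot (nhds 1) :=
  chowYang_flow_ancient_general D hDopen hDconn ρ μ hρpos hμpos hμ hρ hne1 hmax
end

section
/- Along any solution of the Chow–Yang Ricci flow ODE with μ(0) > 1, there is a finite time T such that as t → T⁻: μ(t) → ∞, ρ(t) → 0, and moreover ρ(t)μ(t) → 0. -/
/-!
`F = ρ (μ - 1)⁴ / μ` is a first integral of the flow, and in the variable `v = (μ - 1)⁻¹` the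
flow becomes `(v² + v³) v' = -4 / F`. Hence `v³/3 + v⁴/4` decreases linearly in time and
reaches `0` at a finite time `c`. Inverting this gives an explicit solution on `(-∞, c)`
extending the given one, so by maximality the solution lives exactly on `(-∞, c)`. As `t → c⁻`,
`v → 0⁺`, so `μ = 1 + 1/v → ∞`, `ρ = F v³ (1 + v) → 0` and `ρ μ = F v² (1 + v)² → 0`.
-/

open Set Filter Topology

theorem IsOpen.eq_of_hasDerivAt_eq_zero {D : Set ℝ} {f : ℝ → ℝ} (hD : IsOpen D)
    (hD' : IsPreconnected D) (hf : ∀ t ∈ D, HasDerivAt f 0 t) {s t : ℝ} (hs : s ∈ D)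
    (ht : t ∈ D) : f s = f t :=
  hD.is_const_of_deriv_eq_zero hD' (fun x hx => (hf x hx).differentiableAt.differentiableWithinAt)
    (fun x hx => (hf x hx).deriv) hs ht

namespace ChowYang

/-- Only `v > 0` matters; the branch `v ^ 3 / 3` for `v < 0` makes `clock` an order
isomorphism of `ℝ`, so that its inverse is globally defined and continuous. -/
noncomputable def clock (v : ℝ) : ℝ := v ^ 3 / 3 + max v 0 ^ 4 / 4

lemma clock_of_nonneg {v : ℝ} (hv : 0 ≤ v) : clock v = v ^ 3 / 3 + v ^ 4 / 4 := by
  rw [clock, max_eq_left hv]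

lemma clock_zero : clock 0 = 0 := by simp [clock]

lemma strictMono_clock : StrictMono clock := by
  have hcube : StrictMono fun v : ℝ => v ^ 3 / 3 :=
    (Odd.strictMono_pow (by decide)).div_const (by norm_num)
  refine hcube.add_monotone fun a b hab => ?_
  gcongr

lemma continuous_clock : Continuous clock := by
  unfold clock
  fun_prop

lemma surjective_clock : Function.Surjective clock := by
  refine continuous_clock.surjective ?_ ?_
  · refine tendsto_atTop_mono' _ ?_ tendsto_id
    filter_upwards [eventually_ge_atTop 2] with v hv
    rw [id, clock_of_nonneg (by linarith)]
    nlinarith [pow_nonneg (by linarith : (0 : ℝ) ≤ v) 4,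
      mul_nonneg (by linarith : (0 : ℝ) ≤ v) (by nlinarith : (0 : ℝ) ≤ v ^ 2 - 3)]
  · refine tendsto_atBot_mono' _ ?_ tendsto_id
    filter_upwards [eventually_le_atBot (-2)] with v hv
    rw [id, clock, max_eq_right (by linarith)]
    nlinarith [mul_nonneg (by linarith : (0 : ℝ) ≤ -v) (by nlinarith : (0 : ℝ) ≤ v ^ 2 - 3)]

lemma hasDerivAt_clock {v : ℝ} (hv : 0 < v) : HasDerivAt clock (v ^ 2 + v ^ 3) v := by
  have hpoly : HasDerivAt (fun v : ℝ => v ^ 3 / 3 + v ^ 4 / 4) (v ^ 2 + v ^ 3) v := by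
    refine (((hasDerivAt_pow 3 v).div_const 3).add ((hasDerivAt_pow 4 v).div_const 4)).congr_deriv ?_
    norm_num
  refine hpoly.congr_of_eventuallyEq ?_
  filter_upwards [eventually_gt_nhds hv] with x hx
  exact clock_of_nonneg hx.le

noncomputable def clockIso : ℝ ≃o ℝ :=
  strictMono_clock.orderIsoOfSurjective clock surjective_clock

noncomputable def clockInv (y : ℝ) : ℝ := clockIso.symm y

lemma clock_clockInv (y : ℝ) : clock (clockInv y) = y :=
  clockIso.apply_symm_apply y

lemma clockInv_clock (v : ℝ) : clockInv (clock v) = v :=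
  clockIso.symm_apply_apply v

lemma continuous_clockInv : Continuous clockInv :=
  clockIso.symm.continuous

lemma clockInv_zero : clockInv 0 = 0 := by
  simpa [clock_zero] using clockInv_clock 0

lemma clockInv_pos {y : ℝ} (hy : 0 < y) : 0 < clockInv y := by
  rw [← clockInv_zero]
  exact clockIso.symm.strictMono hy

lemma hasDerivAt_clockInv {y : ℝ} (hy : 0 < y) :
    HasDerivAt clockInv (clockInv y ^ 2 + clockInv y ^ 3)⁻¹ y := by
  have hv := clockInv_pos hy
  exact (hasDerivAt_clock hv).of_local_left_inverse continuous_clockInv.continuousAt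
    (by positivity) (Eventually.of_forall clock_clockInv)

def IsSolution (D : Set ℝ) (ρ μ : ℝ → ℝ) : Prop :=
  ∀ t ∈ D, 0 < ρ t ∧ 0 < μ t ∧ HasDerivAt μ (4 * (μ t - 1) / ρ t) t ∧
    HasDerivAt ρ (-4 * ((μ t)⁻¹ + 3)) t

noncomputable def firstIntegral (ρ μ : ℝ → ℝ) (t : ℝ) : ℝ := ρ t * (μ t - 1) ^ 4 / μ t

lemma firstIntegral_pos {ρ μ : ℝ → ℝ} {t : ℝ} (hρ : 0 < ρ t) (hμ : 1 < μ t) :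
    0 < firstIntegral ρ μ t := by
  have : 0 < μ t - 1 := by linarith
  unfold firstIntegral
  positivity

/-- On a solution with first integral `F` and `μ > 1`, `clock (μ - 1)⁻¹` decreases at
the constant rate `4 / F`, so this is the time at which it reaches `0`. -/
noncomputable def extinctionTime (F : ℝ) (μ : ℝ → ℝ) (t : ℝ) : ℝ :=
  t + F / 4 * clock (μ t - 1)⁻¹

lemma lt_extinctionTime {F t : ℝ} {μ : ℝ → ℝ} (hF : 0 < F) (hμ : 1 < μ t) :
    t < extinctionTime F μ t := by
  have hv : (0 : ℝ) < (μ t - 1)⁻¹ := inv_pos.2 (by linarith)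
  have hclock : 0 < clock (μ t - 1)⁻¹ := clock_zero ▸ strictMono_clock hv
  unfold extinctionTime
  have : 0 < F / 4 * clock (μ t - 1)⁻¹ := by positivity
  linarith

namespace IsSolution

variable {D : Set ℝ} {ρ μ : ℝ → ℝ}

lemma hasDerivAt_firstIntegral (h : IsSolution D ρ μ) {t : ℝ} (ht : t ∈ D) :
    HasDerivAt (firstIntegral ρ μ) 0 t := by
  obtain ⟨hρpos, hμpos, hμ, hρ⟩ := h t ht
  refine ((hρ.mul ((hμ.sub_const 1).pow 4)).div hμ hμpos.ne').congr_deriv ?_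
  simp only [Pi.mul_apply, Pi.pow_apply]
  field_simp
  ring

lemma firstIntegral_eq (h : IsSolution D ρ μ) (hD : IsOpen D) (hD' : IsPreconnected D)
    {s t : ℝ} (hs : s ∈ D) (ht : t ∈ D) : firstIntegral ρ μ s = firstIntegral ρ μ t :=
  hD.eq_of_hasDerivAt_eq_zero hD' (fun _ hx => h.hasDerivAt_firstIntegral hx) hs ht

/-- The first integral vanishes where `μ = 1` but not at `t₀`. -/
lemma one_lt (h : IsSolution D ρ μ) (hD : IsOpen D) (hD' : IsPreconnected D) {t₀ : ℝ}
    (ht₀ : t₀ ∈ D) (h1 : 1 < μ t₀) {t : ℝ} (ht : t ∈ D) : 1 < μ t := by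
  by_contra! hle
  have hcont : ContinuousOn μ D := fun x hx => (h x hx).2.2.1.continuousAt.continuousWithinAt
  obtain ⟨s, hs, hμs⟩ := hD'.intermediate_value ht ht₀ hcont ⟨hle, h1.le⟩
  have hpos := firstIntegral_pos (h t₀ ht₀).1 h1
  rw [← h.firstIntegral_eq hD hD' hs ht₀, firstIntegral, hμs] at hpos
  simp at hpos

lemma hasDerivAt_extinctionTime (h : IsSolution D ρ μ) {t F : ℝ} (ht : t ∈ D)
    (hμ1 : 1 < μ t) (hF : firstIntegral ρ μ t = F) :
    HasDerivAt (extinctionTime F μ) 0 t := by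
  obtain ⟨hρpos, hμpos, hμ, -⟩ := h t ht
  have hsub : μ t - 1 ≠ 0 := by linarith
  have hv : (0 : ℝ) < (μ t - 1)⁻¹ := inv_pos.2 (by linarith)
  have hclock := (hasDerivAt_clock hv).comp t ((hμ.sub_const 1).inv hsub)
  refine ((hasDerivAt_id t).add (hclock.const_mul (F / 4))).congr_deriv ?_
  rw [← hF, firstIntegral]
  field_simp
  ring

lemma extinctionTime_eq (h : IsSolution D ρ μ) (hD : IsOpen D) (hD' : IsPreconnected D)
    {t₀ : ℝ} (ht₀ : t₀ ∈ D) (h1 : 1 < μ t₀) {t : ℝ} (ht : t ∈ D) :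
    extinctionTime (firstIntegral ρ μ t₀) μ t = extinctionTime (firstIntegral ρ μ t₀) μ t₀ :=
  hD.eq_of_hasDerivAt_eq_zero hD' (fun _ hx => h.hasDerivAt_extinctionTime hx
    (h.one_lt hD hD' ht₀ h1 hx) (h.firstIntegral_eq hD hD' hx ht₀)) ht ht₀

end IsSolution

/-- The solution with first integral `F` that becomes extinct at time `c`, written through
`v = (μ - 1)⁻¹`. -/
noncomputable def explicitV (F c t : ℝ) : ℝ := clockInv (4 / F * (c - t))

noncomputable def explicitRho (F c t : ℝ) : ℝ := F * (explicitV F c t ^ 4 + explicitV F c t ^ 3)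

noncomputable def explicitMu (F c t : ℝ) : ℝ := 1 + (explicitV F c t)⁻¹

variable {F c : ℝ}

lemma explicitV_pos (hF : 0 < F) {t : ℝ} (ht : t < c) : 0 < explicitV F c t :=
  clockInv_pos (mul_pos (div_pos four_pos hF) (sub_pos.2 ht))

lemma hasDerivAt_explicitV (hF : 0 < F) {t : ℝ} (ht : t < c) :
    HasDerivAt (explicitV F c) ((explicitV F c t ^ 2 + explicitV F c t ^ 3)⁻¹ * -(4 / F)) t := by
  have hy : 0 < 4 / F * (c - t) := mul_pos (div_pos four_pos hF) (sub_pos.2 ht)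
  have hlin : HasDerivAt (fun s => 4 / F * (c - s)) (-(4 / F)) t := by
    refine (((hasDerivAt_id t).const_sub c).const_mul (4 / F)).congr_deriv ?_
    ring
  exact (hasDerivAt_clockInv hy).comp t hlin

lemma isSolution_explicit (hF : 0 < F) : IsSolution (Iio c) (explicitRho F c) (explicitMu F c) := by
  intro t ht
  have hv := explicitV_pos hF ht
  have hv' := hasDerivAt_explicitV hF ht
  refine ⟨by unfold explicitRho; positivity, by unfold explicitMu; positivity, ?_, ?_⟩
  · refine ((hv'.inv hv.ne').const_add 1).congr_deriv ?_
    simp only [explicitMu, explicitRho]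
    field_simp
    ring
  · refine (((hv'.pow 4).add (hv'.pow 3)).const_mul F).congr_deriv ?_
    simp only [explicitMu]
    field_simp
    ring

lemma explicit_eq {ρ μ : ℝ → ℝ} {t : ℝ} (hμ : 1 < μ t) (hF : firstIntegral ρ μ t = F)
    (hc : extinctionTime F μ t = c) (hFpos : 0 < F) :
    explicitRho F c t = ρ t ∧ explicitMu F c t = μ t := by
  have hv : explicitV F c t = (μ t - 1)⁻¹ := by
    refine strictMono_clock.injective ?_
    rw [explicitV, clock_clockInv, ← hc, extinctionTime]
    field_simp
    ring
  have hsub : μ t - 1 ≠ 0 := by linarith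
  have hμ0 : μ t ≠ 0 := by linarith
  rw [explicitRho, explicitMu, hv, ← hF, firstIntegral]
  constructor
  · field_simp
    ring
  · rw [inv_inv]
    ring

lemma tendsto_explicitV (hF : 0 < F) : Tendsto (explicitV F c) (𝓝[<] c) (𝓝[>] 0) := by
  refine tendsto_nhdsWithin_iff.2 ⟨?_, ?_⟩
  · have hcont : Continuous (explicitV F c) := by
      unfold explicitV
      exact continuous_clockInv.comp (by fun_prop)
    have h0 : explicitV F c c = 0 := by simp [explicitV, clockInv_zero]
    exact h0 ▸ hcont.continuousWithinAt.tendsto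
  · filter_upwards [self_mem_nhdsWithin] with t ht
    exact explicitV_pos hF ht

lemma tendsto_explicitMu (hF : 0 < F) : Tendsto (explicitMu F c) (𝓝[<] c) atTop :=
  tendsto_atTop_add_const_left _ 1 (tendsto_inv_nhdsGT_zero.comp (tendsto_explicitV hF))

lemma tendsto_explicitRho (hF : 0 < F) : Tendsto (explicitRho F c) (𝓝[<] c) (𝓝 0) := by
  have hpoly : Tendsto (fun v : ℝ => F * (v ^ 4 + v ^ 3)) (𝓝 0) (𝓝 0) := by
    simpa using ((by fun_prop : Continuous fun v : ℝ => F * (v ^ 4 + v ^ 3)).tendsto 0)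
  exact hpoly.comp ((tendsto_explicitV hF).mono_right nhdsWithin_le_nhds)

lemma tendsto_explicitRho_mul_explicitMu (hF : 0 < F) :
    Tendsto (fun t => explicitRho F c t * explicitMu F c t) (𝓝[<] c) (𝓝 0) := by
  have hpoly : Tendsto (fun v : ℝ => F * v ^ 2 * (1 + v) ^ 2) (𝓝 0) (𝓝 0) := by
    simpa using ((by fun_prop : Continuous fun v : ℝ => F * v ^ 2 * (1 + v) ^ 2).tendsto 0)
  refine (hpoly.comp ((tendsto_explicitV hF).mono_right nhdsWithin_le_nhds)).congr' ?_
  filter_upwards [self_mem_nhdsWithin] with t ht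
  have hv := (explicitV_pos hF ht).ne'
  simp only [Function.comp, explicitRho, explicitMu]
  field_simp
  ring

end ChowYang

open ChowYang in
/-- For a maximal positive solution of `ρ μ' = 4(μ−1)`, `ρ' = −4(μ⁻¹+3)` with
`μ(0) > 1`: there is a finite time `T` such that as `t → T⁻`, `μ(t) → ∞`,
`ρ(t) → 0` and `ρ(t)μ(t) → 0`. -/
theorem chowYang_flow_extinction_above (D : Set ℝ) (hDopen : IsOpen D)
    (hDconn : D.OrdConnected) (h0D : (0 : ℝ) ∈ D) (ρ μ : ℝ → ℝ)
    (hρpos : ∀ t ∈ D, 0 < ρ t) (hμpos : ∀ t ∈ D, 0 < μ t)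
    (hμ : ∀ t ∈ D, HasDerivAt μ (4 * (μ t - 1) / ρ t) t)
    (hρ : ∀ t ∈ D, HasDerivAt ρ (-4 * ((μ t)⁻¹ + 3)) t)
    (hinit : 1 < μ 0)
    (hmax : ∀ (D' : Set ℝ) (ρ' μ' : ℝ → ℝ), IsOpen D' → D'.OrdConnected → D ⊆ D' →
      (∀ t ∈ D, ρ' t = ρ t ∧ μ' t = μ t) →
      (∀ t ∈ D', 0 < ρ' t ∧ 0 < μ' t ∧
        HasDerivAt μ' (4 * (μ' t - 1) / ρ' t) t ∧
        HasDerivAt ρ' (-4 * ((μ' t)⁻¹ + 3)) t) → D' = D) :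
    ∃ T : ℝ, 0 < T ∧ D ∩ Set.Ici 0 = Set.Ico 0 T ∧
      Filter.Tendsto μ (nhdsWithin T (Set.Iio T)) Filter.atTop ∧
      Filter.Tendsto ρ (nhdsWithin T (Set.Iio T)) (nhds 0) ∧
      Filter.Tendsto (fun t => ρ t * μ t) (nhdsWithin T (Set.Iio T)) (nhds 0) := by
  have hsol : IsSolution D ρ μ := fun t ht => ⟨hρpos t ht, hμpos t ht, hμ t ht, hρ t ht⟩
  have hpre := hDconn.isPreconnected
  set F := firstIntegral ρ μ 0
  set c := extinctionTime F μ 0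
  have hone : ∀ t ∈ D, 1 < μ t := fun t ht => hsol.one_lt hDopen hpre h0D hinit ht
  have hF : 0 < F := firstIntegral_pos (hρpos 0 h0D) hinit
  have hexplicit : ∀ t ∈ D, explicitRho F c t = ρ t ∧ explicitMu F c t = μ t := fun t ht =>
    explicit_eq (hone t ht) (hsol.firstIntegral_eq hDopen hpre ht h0D)
      (hsol.extinctionTime_eq hDopen hpre h0D hinit ht) hF
  have hDc : D ⊆ Iio c := fun t ht =>
    (lt_extinctionTime hF (hone t ht)).trans_eq (hsol.extinctionTime_eq hDopen hpre h0D hinit ht)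
  have hD : Iio c = D := hmax _ _ _ isOpen_Iio ordConnected_Iio hDc
    hexplicit (isSolution_explicit hF)
  have hagree : ∀ᶠ t in 𝓝[<] c, explicitRho F c t = ρ t ∧ explicitMu F c t = μ t := by
    filter_upwards [self_mem_nhdsWithin] with t ht
    exact hexplicit t (hD ▸ ht)
  refine ⟨c, hDc h0D, by rw [← hD, Iio_inter_Ici], ?_, ?_, ?_⟩
  · exact (tendsto_explicitMu hF).congr' (hagree.mono fun _ h => h.2)
  · exact (tendsto_explicitRho hF).congr' (hagree.mono fun _ h => h.1)
  · exact (tendsto_explicitRho_mul_explicitMu hF).congr' (hagree.mono fun _ h => by rw [h.1, h.2])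
end

section
/- For the Chow–Yang Ricci flow trajectories ρ = c·μ/(1−μ)⁴ with μ > 1: as the starting scale ρ_k → ∞ along the fixed vertical line μ = 1+δ (δ > 0 fixed), the time T_k needed for the solution to reach ρ = 1 tends to infinity. Formally: for solutions (ρ_k, μ_k) of ρ μ' = 4(μ−1), ρ' = −4(μ^{-1}+3) with μ_k(0) = 1+δ, ρ_k(0) = ρ_k → ∞, and T_k defined by ρ_k(T_k) = 1, one has T_k → ∞. -/
private lemma chowYang_key (T : ℝ) (hT : 0 ≤ T) (ρ μ : ℝ → ℝ)
    (hρpos : ∀ t ∈ Set.Icc 0 T, 0 < ρ t)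
    (hμd : ∀ t ∈ Set.Icc 0 T, HasDerivAt μ (4 * (μ t - 1) / ρ t) t)
    (hρd : ∀ t ∈ Set.Icc 0 T, HasDerivAt ρ (-4 * ((μ t)⁻¹ + 3)) t)
    (h0 : 1 < μ 0) (hend : ρ T = 1) :
    ρ 0 - 1 ≤ 16 * T := by
  have h0T : (0:ℝ) ∈ Set.Icc 0 T := ⟨le_rfl, hT⟩
  have hTT : T ∈ Set.Icc 0 T := ⟨hT, le_rfl⟩
  have hμcont : ContinuousOn μ (Set.Icc 0 T) := fun t ht =>
    (hμd t ht).continuousAt.continuousWithinAt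
  -- Step 1: μ ≥ 1 on [0, T]
  have hμge : ∀ t ∈ Set.Icc 0 T, 1 ≤ μ t := by
    by_contra h
    push_neg at h
    obtain ⟨s, hs, hμs⟩ := h
    set S : Set ℝ := {t ∈ Set.Icc 0 T | μ t ≤ 1} with hS
    have hSsub : S ⊆ Set.Icc 0 T := fun t ht => ht.1
    have hSclosed : IsClosed S := by
      have : S = Set.Icc 0 T ∩ μ ⁻¹' Set.Iic 1 := by
        ext t; simp [hS, Set.mem_sep_iff, and_comm]
      rw [this]
      exact (hμcont.preimage_isClosed_of_isClosed isClosed_Icc isClosed_Iic)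
    have hScompact : IsCompact S := (isCompact_Icc).of_isClosed_subset hSclosed hSsub
    have hSne : S.Nonempty := ⟨s, hs, hμs.le⟩
    set t₀ := sInf S with ht₀
    have ht₀S : t₀ ∈ S := hScompact.sInf_mem hSne
    have ht₀Icc : t₀ ∈ Set.Icc 0 T := ht₀S.1
    have ht₀le : μ t₀ ≤ 1 := ht₀S.2
    have ht₀pos : 0 < t₀ := by
      rcases lt_or_eq_of_le ht₀Icc.1 with h | h
      · exact h
      · exfalso; rw [← h] at ht₀le; linarith
    -- for t < t₀ in [0,T], μ t > 1
    have hgt : ∀ t ∈ Set.Ico (0:ℝ) t₀, 1 < μ t := by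
      intro t ht
      by_contra hle
      push_neg at hle
      have : t ∈ S := ⟨⟨ht.1, ht.2.le.trans ht₀Icc.2⟩, hle⟩
      have := csInf_le hScompact.bddBelow this
      linarith [ht.2]
    have hsub : Set.Icc (0:ℝ) t₀ ⊆ Set.Icc 0 T :=
      Set.Icc_subset_Icc le_rfl ht₀Icc.2
    have hmono : MonotoneOn μ (Set.Icc 0 t₀) := by
      apply monotoneOn_of_deriv_nonneg (convex_Icc 0 t₀) (hμcont.mono hsub)
      · intro t ht
        rw [interior_Icc] at ht
        exact ((hμd t (hsub ⟨ht.1.le, ht.2.le⟩)).differentiableAt).differentiableWithinAt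
      · intro t ht
        rw [interior_Icc] at ht
        have htIcc := hsub ⟨ht.1.le, ht.2.le⟩
        rw [(hμd t htIcc).deriv]
        have h1 : 1 < μ t := hgt t ⟨ht.1.le, ht.2⟩
        have h2 : 0 < ρ t := hρpos t htIcc
        have h3 : 0 ≤ 4 * (μ t - 1) := by linarith
        exact div_nonneg h3 h2.le
    have := hmono ⟨le_rfl, ht₀pos.le⟩ ⟨ht₀pos.le, le_rfl⟩ ht₀pos.le
    linarith
  -- Step 2: g t = ρ t + 16 t is monotone on [0, T]
  have hmono : MonotoneOn (fun t => ρ t + 16 * t) (Set.Icc 0 T) := by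
    apply monotoneOn_of_deriv_nonneg (convex_Icc 0 T)
    · exact ContinuousOn.add (fun t ht => (hρd t ht).continuousAt.continuousWithinAt)
        ((continuous_const.mul continuous_id).continuousOn)
    · intro t ht
      rw [interior_Icc] at ht
      have htIcc : t ∈ Set.Icc 0 T := ⟨ht.1.le, ht.2.le⟩
      exact (((hρd t htIcc).add ((hasDerivAt_id t).const_mul 16)).differentiableAt).differentiableWithinAt
    · intro t ht
      rw [interior_Icc] at ht
      have htIcc : t ∈ Set.Icc 0 T := ⟨ht.1.le, ht.2.le⟩
      have hd : HasDerivAt (fun t => ρ t + 16 * t) (-4 * ((μ t)⁻¹ + 3) + 16 * 1) t :=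
        (hρd t htIcc).add ((hasDerivAt_id t).const_mul 16)
      rw [hd.deriv]
      have h1 : 1 ≤ μ t := hμge t htIcc
      have : (μ t)⁻¹ ≤ 1 := inv_le_one_of_one_le₀ h1
      linarith
  have := hmono h0T hTT hT
  simp only [mul_zero, add_zero, hend] at this
  linarith
  
/-- For solutions of the Chow–Yang Ricci flow ODE starting on the line `μ = 1+δ`
with initial scales `ρ_k(0) → ∞`, the times `T_k` at which `ρ_k(T_k) = 1` tend to
infinity. -/
theorem chowYang_flow_long_time (δ : ℝ) (hδ : 0 < δ)
    (ρ μ : ℕ → ℝ → ℝ) (T : ℕ → ℝ) (hT : ∀ k, 0 ≤ T k)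
    (hρpos : ∀ k, ∀ t ∈ Set.Icc 0 (T k), 0 < ρ k t)
    (hμpos : ∀ k, ∀ t ∈ Set.Icc 0 (T k), 0 < μ k t)
    (hμ : ∀ k, ∀ t ∈ Set.Icc 0 (T k),
      HasDerivAt (μ k) (4 * (μ k t - 1) / ρ k t) t)
    (hρ : ∀ k, ∀ t ∈ Set.Icc 0 (T k),
      HasDerivAt (ρ k) (-4 * ((μ k t)⁻¹ + 3)) t)
    (hinit : ∀ k, μ k 0 = 1 + δ)
    (hρ0 : Filter.Tendsto (fun k => ρ k 0) Filter.atTop Filter.atTop)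
    (hTk : ∀ k, ρ k (T k) = 1) :
    Filter.Tendsto T Filter.atTop Filter.atTop := by
  have hbound : ∀ k, (ρ k 0 - 1) / 16 ≤ T k := by
    intro k
    have h0 : 1 < μ k 0 := by rw [hinit k]; linarith
    have := chowYang_key (T k) (hT k) (ρ k) (μ k) (hρpos k) (hμ k) (hρ k) h0 (hTk k)
    linarith
  have h1 : Filter.Tendsto (fun k => (ρ k 0 - 1) / 16) Filter.atTop Filter.atTop :=
    (hρ0.atTop_add tendsto_const_nhds).atTop_div_const (by norm_num)
  exact Filter.tendsto_atTop_mono hbound h1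
end
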